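/- Let μ be a σ-finite measure on a measurable space X, let p, q, p̄ : X → [0,∞) be measurable probability densities with respect to μ, suppose p(x)·p̄(x) = 0 for μ-almost every x, and suppose p(x) = 0 for μ-almost every x with q(x) = 0. Let f : [0,∞) → ℝ be strictly convex with f(1) = 0 and f(0) finite, and let λ ∈ (0,1]. If the relevant integrand is μ-integrable and D_f(p ‖ λq + (1−λ)p̄) = λ f(1/λ) + (1−λ) f(0), then q(x) = p(x) for μ-almost every x. -/
import Mathlib
open MeasureTheory Set

lemma exists_supporting_line {f : ℝ → ℝ} (hf : StrictConvexOn ℝ (Set.Ici 0) f)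
    {c : ℝ} (hc : 0 < c) :
    ∃ m : ℝ, ∀ t ∈ Set.Ici (0:ℝ),
      f c + m * (t - c) ≤ f t ∧ (t ≠ c → f c + m * (t - c) < f t) := by
  have hcmem : c ∈ Set.Ici (0:ℝ) := le_of_lt hc
  set S : Set ℝ := (fun a => (f c - f a) / (c - a)) '' Set.Ico 0 c with hS
  have hSne : S.Nonempty := ⟨(f c - f 0) / (c - 0), ⟨0, ⟨le_refl _, hc⟩, rfl⟩⟩
  have hbdd : BddAbove S := by
    refine ⟨(f (c+1) - f c) / ((c+1) - c), ?_⟩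
    rintro y ⟨a, ⟨ha0, hac⟩, rfl⟩
    exact hf.convexOn.slope_mono_adjacent ha0 (by simp; linarith) hac (by linarith)
  set m := sSup S with hm
  have hweak : ∀ t ∈ Set.Ici (0:ℝ), f c + m * (t - c) ≤ f t := by
    intro t ht
    rcases lt_trichotomy t c with h | h | h
    · have hmem : (f c - f t) / (c - t) ∈ S := ⟨t, ⟨ht, h⟩, rfl⟩
      have := le_csSup hbdd hmem
      have hct : 0 < c - t := by linarith
      rw [div_le_iff₀ hct] at this
      nlinarith
    · simp [h]
    · have hle : m ≤ (f t - f c) / (t - c) := by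
        apply csSup_le hSne
        rintro y ⟨a, ⟨ha0, hac⟩, rfl⟩
        exact hf.convexOn.slope_mono_adjacent ha0 (le_trans (le_of_lt hc) (le_of_lt h)) hac h
      have htc : 0 < t - c := by linarith
      rw [le_div_iff₀ htc] at hle
      linarith
  refine ⟨m, fun t ht => ⟨hweak t ht, fun hne => ?_⟩⟩
  rcases lt_or_eq_of_le (hweak t ht) with h | h
  · exact h
  exfalso
  have hmid : (1/2 : ℝ) • t + (1/2 : ℝ) • c ∈ Set.Ici (0:ℝ) := by
    simp only [smul_eq_mul]
    have : (0:ℝ) ≤ t := ht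
    simp only [Set.mem_Ici]; linarith
  have hstrict := hf.2 ht hcmem hne (by norm_num : (0:ℝ) < 1/2) (by norm_num : (0:ℝ) < 1/2) (by norm_num)
  have hw := hweak _ hmid
  simp only [smul_eq_mul] at hstrict hw
  nlinarith

set_option maxHeartbeats 1000000 in
/-- For probability densities `p, q, pbar` w.r.t. a σ-finite measure `μ`,
with `p ⊥ pbar` (disjoint supports) and `p ≪ q`, a *strictly* convex `f : [0,∞) → ℝ` with
`f 1 = 0`, and `λ ∈ (0,1]`: if the `f`-divergence integrand of `p` against
`λ q + (1-λ) pbar` is integrable and `D_f(p ‖ λq + (1-λ)pbar) = λ f(1/λ) + (1-λ) f 0`,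
then `q = p` μ-almost everywhere.  (In Lean, division by zero yields `0`, so the integrand
is automatically `0` whenever the mixture density vanishes.) -/
theorem stmt_5 {X : Type*} [MeasurableSpace X] (μ : Measure X) [SigmaFinite μ]
    (p q pbar : X → ℝ)
    (hpm : Measurable p) (hqm : Measurable q) (hpbarm : Measurable pbar)
    (hp0 : ∀ x, 0 ≤ p x) (hq0 : ∀ x, 0 ≤ q x) (hpbar0 : ∀ x, 0 ≤ pbar x)
    (hp1 : ∫ x, p x ∂μ = 1) (hq1 : ∫ x, q x ∂μ = 1) (hpbar1 : ∫ x, pbar x ∂μ = 1)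
    (hdisj : ∀ᵐ x ∂μ, p x * pbar x = 0)
    (habs : ∀ᵐ x ∂μ, q x = 0 → p x = 0)
    (f : ℝ → ℝ) (hf : StrictConvexOn ℝ (Set.Ici 0) f) (hf1 : f 1 = 0)
    (lam : ℝ) (hlam : lam ∈ Set.Ioc (0 : ℝ) 1)
    (hint : Integrable (fun x =>
      (lam * q x + (1 - lam) * pbar x) * f (p x / (lam * q x + (1 - lam) * pbar x))) μ)
    (heq : ∫ x, (lam * q x + (1 - lam) * pbar x) *
        f (p x / (lam * q x + (1 - lam) * pbar x)) ∂μ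
      = lam * f (1 / lam) + (1 - lam) * f 0) :
    ∀ᵐ x ∂μ, q x = p x := by
  obtain ⟨hlam0, hlam1⟩ := hlam
  -- integrability of the densities
  have hip : Integrable p μ := by
    by_contra h; rw [integral_undef h] at hp1; norm_num at hp1
  have hiq : Integrable q μ := by
    by_contra h; rw [integral_undef h] at hq1; norm_num at hq1
  have hipbar : Integrable pbar μ := by
    by_contra h; rw [integral_undef h] at hpbar1; norm_num at hpbar1
  set A : Set X := {x | 0 < p x} with hAdef
  have hA : MeasurableSet A := measurableSet_lt measurable_const hpm
  -- pbar vanishes a.e. on A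
  have hpbarA0 : ∀ᵐ x ∂μ, x ∈ A → pbar x = 0 := by
    filter_upwards [hdisj] with x hx hxA
    rcases mul_eq_zero.mp hx with h | h
    · exact absurd h (ne_of_gt hxA)
    · exact h
  have hintA_pbar : ∫ x in A, pbar x ∂μ = 0 := by
    rw [setIntegral_congr_ae hA (g := fun _ => (0:ℝ)) (by filter_upwards [hpbarA0] with x hx hxA; exact hx hxA)]
    simp
  -- p vanishes pointwise off A
  have hpAc : ∀ x ∈ Aᶜ, p x = 0 := fun x hx =>
    le_antisymm (not_lt.mp hx) (hp0 x)
  have hpAc_int : ∫ x in Aᶜ, p x ∂μ = 0 := by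
    rw [setIntegral_congr_fun hA.compl (g := fun _ => (0:ℝ)) (fun x hx => hpAc x hx)]
    simp
  have hpA1 : ∫ x in A, p x ∂μ = 1 := by
    have h := integral_add_compl hA hip
    rw [hpAc_int, hp1] at h
    linarith
  have hpbarAc1 : ∫ x in Aᶜ, pbar x ∂μ = 1 := by
    have h := integral_add_compl hA hipbar
    rw [hintA_pbar, hpbar1] at h
    linarith
  set s : ℝ := ∫ x in A, q x ∂μ with hsdef
  have hs_nonneg : 0 ≤ s := setIntegral_nonneg hA (fun x _ => hq0 x)
  have hs_le : s ≤ 1 := by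
    have := setIntegral_le_integral hiq (Filter.Eventually.of_forall hq0) (s := A)
    rw [hq1] at this; exact this
  have hqAc_int : ∫ x in Aᶜ, q x ∂μ = 1 - s := by
    have := integral_add_compl hA hiq
    rw [hq1] at this; linarith
  have hs_pos : 0 < s := by
    rcases lt_or_eq_of_le hs_nonneg with h | h
    · exact h
    exfalso
    have hq0A : ∀ᵐ x ∂μ.restrict A, q x = 0 := by
      have := (integral_eq_zero_iff_of_nonneg_ae
        (Filter.Eventually.of_forall (fun x => hq0 x)) (hiq.restrict)).mp h.symm
      filter_upwards [this] with x hx using hx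
    have hq0A' : ∀ᵐ x ∂μ, x ∈ A → q x = 0 := (ae_restrict_iff' hA).mp hq0A
    have hp_ae0 : ∀ᵐ x ∂μ, p x = 0 := by
      filter_upwards [hq0A', habs] with x h1 h2
      by_cases hx : x ∈ A
      · exact h2 (h1 hx)
      · exact hpAc x hx
    have : ∫ x, p x ∂μ = 0 := by
      rw [integral_congr_ae (g := fun _ => (0:ℝ)) hp_ae0]; simp
    rw [hp1] at this; norm_num at this
  have hls_pos : 0 < lam * s := mul_pos hlam0 hs_pos
  set c : ℝ := 1 / (lam * s) with hcdef
  have hc : 0 < c := by positivity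
  have hlcs : lam * c * s = 1 := by
    rw [hcdef]; field_simp
  obtain ⟨m, hmsupp⟩ := exists_supporting_line hf hc
  -- the lower-bound function
  set G : X → ℝ := fun x => if 0 < p x then lam * q x * f c + m * (p x - lam * c * q x)
      else (lam * q x + (1 - lam) * pbar x) * f 0 with hGdef
  have hcomb : ∀ (B : Set X), MeasurableSet B → ∀ a b d : ℝ,
      ∫ x in B, (a * q x + b * p x + d * pbar x) ∂μ
        = a * ∫ x in B, q x ∂μ + b * (∫ x in B, p x ∂μ) + d * ∫ x in B, pbar x ∂μ := by
    intro B hB a b d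
    have i1 : Integrable (fun x => a * q x) (μ.restrict B) := hiq.restrict.const_mul _
    have i2 : Integrable (fun x => b * p x) (μ.restrict B) := hip.restrict.const_mul _
    have i3 : Integrable (fun x => d * pbar x) (μ.restrict B) := hipbar.restrict.const_mul _
    have i12 : Integrable (fun x => a * q x + b * p x) (μ.restrict B) := i1.add i2
    rw [integral_add i12 i3, integral_add i1 i2,
      integral_const_mul, integral_const_mul, integral_const_mul]
  have hGeq : G = fun x => A.indicator
        (fun x => (lam * f c - m * (lam * c)) * q x + m * p x + 0 * pbar x) x
      + Aᶜ.indicator (fun x => (f 0 * lam) * q x + 0 * p x + (f 0 * (1 - lam)) * pbar x) x := by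
    funext x
    by_cases hx : 0 < p x
    · have hxA : x ∈ A := hx
      have hxA' : x ∉ Aᶜ := fun h => h hxA
      simp only [hGdef, Set.indicator_of_mem hxA, Set.indicator_of_notMem hxA', if_pos hx]
      ring
    · have hxA : x ∉ A := hx
      have hxA' : x ∈ Aᶜ := hxA
      simp only [hGdef, Set.indicator_of_notMem hxA, Set.indicator_of_mem hxA', if_neg hx]
      ring
  have hiG1 : Integrable (fun x => (lam * f c - m * (lam * c)) * q x + m * p x + 0 * pbar x) μ :=
    ((hiq.const_mul _).add (hip.const_mul _)).add (hipbar.const_mul _)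
  have hiG2 : Integrable (fun x => (f 0 * lam) * q x + 0 * p x + (f 0 * (1 - lam)) * pbar x) μ :=
    ((hiq.const_mul _).add (hip.const_mul _)).add (hipbar.const_mul _)
  have hiG : Integrable G μ := by
    rw [hGeq]
    exact (hiG1.indicator hA).add (hiG2.indicator hA.compl)
  have hpAc1 : ∫ x in Aᶜ, p x ∂μ = 0 := hpAc_int
  have hGint : ∫ x, G x ∂μ = (lam * f c) * s + m * (1 - lam * c * s)
      + f 0 * (lam * (1 - s) + (1 - lam)) := by
    rw [hGeq, integral_add (hiG1.indicator hA) (hiG2.indicator hA.compl),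
      integral_indicator hA, integral_indicator hA.compl,
      hcomb A hA _ _ _, hcomb Aᶜ hA.compl _ _ _,
      hpA1, hintA_pbar, hpAc1, hpbarAc1, hqAc_int, ← hsdef]
    ring
  -- pointwise a.e. inequality
  have hGle : ∀ᵐ x ∂μ, G x ≤ (lam * q x + (1 - lam) * pbar x) *
      f (p x / (lam * q x + (1 - lam) * pbar x)) := by
    filter_upwards [hdisj, habs] with x h1 h2
    by_cases hx : 0 < p x
    · have hpbar0x : pbar x = 0 := by
        rcases mul_eq_zero.mp h1 with h | h
        · exact absurd h (ne_of_gt hx)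
        · exact h
      have hqx : 0 < q x := by
        rcases lt_or_eq_of_le (hq0 x) with h | h
        · exact h
        · exact absurd (h2 h.symm) (ne_of_gt hx)
      have hlq : 0 < lam * q x := mul_pos hlam0 hqx
      set t : ℝ := p x / (lam * q x) with htdef
      have ht0 : t ∈ Set.Ici (0:ℝ) := div_nonneg (hp0 x) (le_of_lt hlq)
      have hkey := (hmsupp t ht0).1
      have htmul : lam * q x * t = p x := by
        rw [htdef]; field_simp
      have : lam * q x * (f c + m * (t - c)) ≤ lam * q x * f t :=
        mul_le_mul_of_nonneg_left hkey (le_of_lt hlq)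
      have h2 : m * (p x - lam * c * q x) = lam * q x * (m * (t - c)) := by
        rw [← htmul]; ring
      simp only [hGdef, if_pos hx, hpbar0x, mul_zero, add_zero]
      rw [← htdef]
      nlinarith [this, h2]
    · have hpx : p x = 0 := le_antisymm (not_lt.mp hx) (hp0 x)
      simp [hGdef, if_neg hx, hpx, zero_div]
  -- integral comparison
  have hle_int : ∫ x, G x ∂μ ≤ lam * f (1 / lam) + (1 - lam) * f 0 := by
    rw [← heq]
    exact integral_mono_ae hiG hint hGle
  rw [hGint, hlcs] at hle_int
  -- s must equal 1
  have hs1 : s = 1 := by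
    by_contra hne
    have hslt : s < 1 := lt_of_le_of_ne hs_le hne
    have hcne0 : c ≠ 0 := ne_of_gt hc
    have hstrict := hf.2 (le_of_lt hc) (le_refl (0:ℝ) : (0:ℝ) ∈ Set.Ici 0) hcne0
      hs_pos (by linarith : (0:ℝ) < 1 - s) (by ring)
    simp only [smul_eq_mul, mul_zero, add_zero] at hstrict
    have hsc : s * c = 1 / lam := by
      rw [hcdef]; field_simp
    rw [hsc] at hstrict
    have hmul := mul_lt_mul_of_pos_left hstrict hlam0
    nlinarith [hmul, hle_int]
  -- now c = 1/lam and the integrals are equal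
  have hc_eq : c = 1 / lam := by rw [hcdef, hs1, mul_one]
  have hint_eq : ∫ x, ((lam * q x + (1 - lam) * pbar x) *
      f (p x / (lam * q x + (1 - lam) * pbar x)) - G x) ∂μ = 0 := by
    rw [integral_sub hint hiG, heq, hGint, hlcs, hs1, hc_eq]
    ring
  have hae_eq : ∀ᵐ x ∂μ, (lam * q x + (1 - lam) * pbar x) *
      f (p x / (lam * q x + (1 - lam) * pbar x)) = G x := by
    have hnn : 0 ≤ᵐ[μ] fun x => (lam * q x + (1 - lam) * pbar x) *
        f (p x / (lam * q x + (1 - lam) * pbar x)) - G x := by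
      filter_upwards [hGle] with x hx
      simp only [Pi.zero_apply]; linarith
    have := (integral_eq_zero_iff_of_nonneg_ae hnn (hint.sub hiG)).mp hint_eq
    filter_upwards [this] with x hx
    simp only [Pi.zero_apply] at hx
    linarith
  -- q vanishes a.e. off A
  have hqAc0 : ∀ᵐ x ∂μ, x ∈ Aᶜ → q x = 0 := by
    have h0 : ∫ x in Aᶜ, q x ∂μ = 0 := by rw [hqAc_int, hs1]; ring
    have := (integral_eq_zero_iff_of_nonneg_ae
      (Filter.Eventually.of_forall (fun x => hq0 x)) (hiq.restrict)).mp h0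
    exact (ae_restrict_iff' hA.compl).mp (by filter_upwards [this] with x hx using hx)
  -- conclusion
  filter_upwards [hdisj, habs, hae_eq, hqAc0] with x h1 h2 h3 h4
  by_cases hx : 0 < p x
  · have hpbar0x : pbar x = 0 := by
      rcases mul_eq_zero.mp h1 with h | h
      · exact absurd h (ne_of_gt hx)
      · exact h
    have hqx : 0 < q x := by
      rcases lt_or_eq_of_le (hq0 x) with h | h
      · exact h
      · exact absurd (h2 h.symm) (ne_of_gt hx)
    have hlq : 0 < lam * q x := mul_pos hlam0 hqx
    set t : ℝ := p x / (lam * q x) with htdef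
    have ht0 : t ∈ Set.Ici (0:ℝ) := div_nonneg (hp0 x) (le_of_lt hlq)
    have htmul : lam * q x * t = p x := by rw [htdef]; field_simp
    have h2 : m * (p x - lam * c * q x) = lam * q x * (m * (t - c)) := by
      rw [← htmul]; ring
    have h3' : lam * q x * f t = lam * q x * (f c + m * (t - c)) := by
      simp only [hGdef, if_pos hx, hpbar0x, mul_zero, add_zero] at h3
      rw [← htdef] at h3
      nlinarith [h3, h2]
    have hfeq : f t = f c + m * (t - c) := mul_left_cancel₀ (ne_of_gt hlq) h3'
    have htc : t = c := by
      by_contra hne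
      exact absurd hfeq.symm (ne_of_lt ((hmsupp t ht0).2 hne))
    have : p x = lam * q x * c := by rw [← htmul, htc]
    rw [this, hc_eq]; field_simp
  · have hpx : p x = 0 := le_antisymm (not_lt.mp hx) (hp0 x)
    rw [hpx, h4 hx]
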